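/- Let 𝕊 be a K×K {0,1}-matrix each of whose rows contains at least one entry 1, and S_1, …, S_K ∈ ℝ^{d×d}, with Kozyakin 𝕊-lift S^{(1)}, …, S^{(K)} ∈ ℝ^{Kd×Kd}. Then for every n ≥ 2 and every 𝕊-admissible word (i_0, …, i_{n-1}) ∈ {1,…,K}^n, one has ‖S^{(i_0)} ⋯ S^{(i_{n-1})}‖ ≥ ‖S_{i_0} ⋯ S_{i_{n-1}}‖, where ‖·‖ is the ℓ²-operator norm on matrices. -/

import Mathlib

open MeasureTheory Filter Matrix
open scoped Kronecker

/-- The ℓ²-operator norm of a real square matrix. -/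
noncomputable def l2OpNorm {ι : Type*} [Fintype ι] [DecidableEq ι]
    (A : Matrix ι ι ℝ) : ℝ :=
  ‖Matrix.toEuclideanCLM (𝕜 := ℝ) A‖

/-- The spectral radius of a real square matrix: the maximum of the absolute values
of its (complex) eigenvalues. -/
noncomputable def specRad {ι : Type*} [Fintype ι] [DecidableEq ι]
    (A : Matrix ι ι ℝ) : ℝ :=
  (spectralRadius ℂ (A.map (fun x => (x : ℂ)))).toReal

/-- The ordered product `S_{w 0} * S_{w 1} * ⋯ * S_{w (n-1)}`. -/
noncomputable def wordProd {K : ℕ} {ι : Type*} [Fintype ι] [DecidableEq ι]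
    (S : Fin K → Matrix ι ι ℝ) (n : ℕ) (w : ℕ → Fin K) : Matrix ι ι ℝ :=
  (List.ofFn fun k : Fin n => S (w k)).prod

/-- The word `(w 0, …, w (n-1))` is `𝕊`-admissible. -/
def Admissible {K : ℕ} (𝕊 : Matrix (Fin K) (Fin K) ℝ) (n : ℕ) (w : ℕ → Fin K) : Prop :=
  ∀ k, k + 1 < n → 𝕊 (w k) (w (k + 1)) = 1

/-- The word `(w 0, …, w (n-1))` is `𝕊`-periodically extendable. -/
def PerExt {K : ℕ} (𝕊 : Matrix (Fin K) (Fin K) ℝ) (n : ℕ) (w : ℕ → Fin K) : Prop :=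
  Admissible 𝕊 n w ∧ 𝕊 (w (n - 1)) (w 0) = 1

/-- The Kozyakin `𝕊`-lift `S^{(k)} = (δ_kᵀ 𝕊_k) ⊗ S_k`. -/
noncomputable def kozLift {K d : ℕ} (𝕊 : Matrix (Fin K) (Fin K) ℝ)
    (S : Fin K → Matrix (Fin d) (Fin d) ℝ) (k : Fin K) :
    Matrix (Fin K × Fin d) (Fin K × Fin d) ℝ :=
  (Matrix.vecMulVec (Pi.single k 1) (𝕊 k)) ⊗ₖ S k

/-
The product of the lifts along an admissible word telescopes: since `𝕊_{i_k} δ_{i_{k+1}}ᵀ = 1`,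
it equals `(δ_{i_0}ᵀ 𝕊_{i_{n-1}}) ⊗ (S_{i_0} ⋯ S_{i_{n-1}})`. The block of a Kronecker product
`A ⊗ B` at `(a, j)` is `A_{aj} B`, and a submatrix has smaller ℓ²-operator norm than the whole
matrix (it is `R M Cᴴ` with `R Rᴴ = 1` and `C Cᴴ = 1`), so `‖A ⊗ B‖ ≥ |A_{aj}| ‖B‖`. Taking
`j` with `𝕊_{i_{n-1} j} = 1` gives the claim.
-/

open scoped Matrix.Norms.L2Operator

namespace Matrix

variable {𝕜 : Type*} [RCLike 𝕜] {l m n p : Type*}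

lemma kronecker_submatrix_prodMk {α : Type*} [Mul α] (A : Matrix l m α) (B : Matrix n p α)
    (a : l) (j : m) :
    (A ⊗ₖ B).submatrix (Prod.mk a) (Prod.mk j) = A a j • B := by
  ext
  simp

variable [Fintype l] [Fintype m] [Fintype n] [Fintype p]

lemma l2_opNorm_one_submatrix_le [DecidableEq l] [DecidableEq m] {f : l → m}
    (hf : Function.Injective f) : ‖(1 : Matrix m m 𝕜).submatrix f id‖ ≤ 1 := by
  set R := (1 : Matrix m m 𝕜).submatrix f id
  have hR : R * Rᴴ = 1 := by
    rw [conjTranspose_submatrix, conjTranspose_one, ← submatrix_mul _ _ _ _ _ Function.bijective_id,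
      Matrix.one_mul, submatrix_one _ hf]
  have hsq : ‖R‖ * ‖R‖ ≤ 1 := by
    calc ‖R‖ * ‖R‖ = ‖Rᴴ‖ * ‖Rᴴ‖ := by rw [l2_opNorm_conjTranspose]
      _ = ‖(1 : Matrix l l 𝕜)‖ := by
        rw [← l2_opNorm_conjTranspose_mul_self, conjTranspose_conjTranspose, hR]
      _ ≤ 1 := by
        rw [← diagonal_one, l2_opNorm_diagonal]
        exact pi_norm_le_iff_of_nonneg zero_le_one |>.mpr fun _ => by simp
  nlinarith [norm_nonneg R]

lemma l2_opNorm_submatrix_le [DecidableEq l] [DecidableEq m] [DecidableEq n] [DecidableEq p]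
    {f : l → m} {g : p → n} (hf : Function.Injective f) (hg : Function.Injective g)
    (M : Matrix m n 𝕜) : ‖M.submatrix f g‖ ≤ ‖M‖ := by
  have hM : M.submatrix f g =
      (1 : Matrix m m 𝕜).submatrix f id * M * ((1 : Matrix n n 𝕜).submatrix g id)ᴴ := by
    rw [conjTranspose_submatrix, conjTranspose_one]
    have h1 := one_submatrix_mul f (Equiv.refl m) M
    have h2 := mul_submatrix_one (Equiv.refl n) g (M.submatrix f id)
    simp only [Equiv.coe_refl, Equiv.refl_symm, Function.id_comp, submatrix_submatrix,
      Function.comp_id] at h1 h2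
    rw [h1, h2]
  calc ‖M.submatrix f g‖
      ≤ ‖(1 : Matrix m m 𝕜).submatrix f id‖ * ‖M‖ * ‖((1 : Matrix n n 𝕜).submatrix g id)ᴴ‖ := by
        rw [hM]
        exact (l2_opNorm_mul _ _).trans (by gcongr; exact l2_opNorm_mul _ _)
    _ ≤ 1 * ‖M‖ * 1 := by
        rw [l2_opNorm_conjTranspose]
        gcongr
        exacts [l2_opNorm_one_submatrix_le hf, l2_opNorm_one_submatrix_le hg]
    _ = ‖M‖ := by ring

lemma norm_mul_l2_opNorm_le_kronecker [DecidableEq l] [DecidableEq m] [DecidableEq n]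
    [DecidableEq p] (A : Matrix l m 𝕜) (B : Matrix n p 𝕜) (a : l) (j : m) :
    ‖A a j‖ * ‖B‖ ≤ ‖A ⊗ₖ B‖ := by
  rw [← norm_smul, ← kronecker_submatrix_prodMk]
  exact l2_opNorm_submatrix_le (Prod.mk_right_injective a) (Prod.mk_right_injective j) _

end Matrix

lemma l2OpNorm_eq_norm {ι : Type*} [Fintype ι] [DecidableEq ι] (A : Matrix ι ι ℝ) :
    l2OpNorm A = ‖A‖ :=
  rfl

lemma wordProd_succ {K : ℕ} {ι : Type*} [Fintype ι] [DecidableEq ι]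
    (S : Fin K → Matrix ι ι ℝ) (n : ℕ) (w : ℕ → Fin K) :
    wordProd S (n + 1) w = S (w 0) * wordProd S n (fun k => w (k + 1)) := by
  simp [wordProd, List.ofFn_succ]

lemma wordProd_kozLift {K d : ℕ} (𝕊 : Matrix (Fin K) (Fin K) ℝ)
    (S : Fin K → Matrix (Fin d) (Fin d) ℝ) (n : ℕ) (w : ℕ → Fin K)
    (hw : Admissible 𝕊 (n + 1) w) :
    wordProd (kozLift 𝕊 S) (n + 1) w =
      vecMulVec (Pi.single (w 0) 1) (𝕊 (w n)) ⊗ₖ wordProd S (n + 1) w := by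
  induction n generalizing w with
  | zero => simp [wordProd, kozLift]
  | succ n ih =>
    have hstep : 𝕊 (w 0) ⬝ᵥ Pi.single (w 1) 1 = 1 := by
      rw [dotProduct_single, mul_one]
      exact hw 0 (by omega)
    rw [wordProd_succ, wordProd_succ S, ih _ fun k hk => hw (k + 1) (by omega), kozLift,
      ← mul_kronecker_mul, vecMulVec_mul_vecMulVec, hstep, one_smul]

theorem stmt19_general {K d : ℕ}
    (S : Fin K → Matrix (Fin d) (Fin d) ℝ)
    (𝕊 : Matrix (Fin K) (Fin K) ℝ)
    (hrow : ∀ i, ∃ j, 𝕊 i j = 1)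
    (n : ℕ) (hn : 2 ≤ n) (w : ℕ → Fin K)
    (hadm : Admissible 𝕊 n w) :
    l2OpNorm (wordProd S n w) ≤ l2OpNorm (wordProd (kozLift 𝕊 S) n w) := by
  obtain ⟨m, rfl⟩ : ∃ m, n = m + 1 := ⟨n - 1, by omega⟩
  obtain ⟨j, hj⟩ := hrow (w m)
  rw [wordProd_kozLift 𝕊 S m w hadm, l2OpNorm_eq_norm, l2OpNorm_eq_norm]
  simpa [vecMulVec_apply, hj] using norm_mul_l2_opNorm_le_kronecker
    (vecMulVec (Pi.single (w 0) 1) (𝕊 (w m))) (wordProd S (m + 1) w) (w 0) j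

theorem stmt19 {K d : ℕ} (hK : 2 ≤ K) (hd : 1 ≤ d)
    (S : Fin K → Matrix (Fin d) (Fin d) ℝ)
    (𝕊 : Matrix (Fin K) (Fin K) ℝ) (h01 : ∀ i j, 𝕊 i j = 0 ∨ 𝕊 i j = 1)
    (hrow : ∀ i, ∃ j, 𝕊 i j = 1)
    (n : ℕ) (hn : 2 ≤ n) (w : ℕ → Fin K)
    (hadm : Admissible 𝕊 n w) :
    l2OpNorm (wordProd S n w) ≤ l2OpNorm (wordProd (kozLift 𝕊 S) n w) :=
  stmt19_general S 𝕊 hrow n hn w hadm
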